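/- For every finite simple graph G with vertex set V and edge set E and every positive integer x, the number of proper colorings of G with x colors equals (−1)^{|V| − k(G)} · x^{k(G)} · t(G; 1−x, 0), where t(G;x,y) = ∑_{A ⊆ E} (x−1)^{k(A) − k(G)} (y−1)^{|A| − |V| + k(A)} is the Tutte polynomial given by its spanning-subgraph expansion. -/

import Mathlib

/-!
Inclusion–exclusion over the set `A` of edges on which a coloring is monochromatic gives
`P(G, x) = ∑_{A ⊆ E} (-1)^{|A|} x^{k(A)}`, because the colorings constant on the edges of `A`
are exactly the colorings of the components of `(V, A)`. Since `k(A) ≥ k(G)` for `A ⊆ E`, the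
`A`-term of `(-1)^{|V| - k(G)} x^{k(G)} t(G; 1 - x, 0)` is `(-1)^{|A|} x^{k(A)}` as well.
-/

open Finset

/-- Number of connected components of the spanning subgraph `(V, A)`. -/
noncomputable def numComp {V : Type*} [Fintype V] (A : Finset (Sym2 V)) : ℕ :=
  Nat.card (SimpleGraph.fromEdgeSet (A : Set (Sym2 V))).ConnectedComponent

/-- The Tutte polynomial via its spanning-subgraph expansion:
`t(G;x,y) = ∑_{A ⊆ E} (x−1)^{k(A) − k(G)} (y−1)^{|A| − |V| + k(A)}`. -/
noncomputable def tutte {V : Type*} [Fintype V] [DecidableEq V]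
    (G : SimpleGraph V) [DecidableRel G.Adj] (x y : ℝ) : ℝ :=
  ∑ A ∈ G.edgeFinset.powerset,
    (x - 1) ^ ((numComp A : ℤ) - (numComp G.edgeFinset : ℤ)) *
      (y - 1) ^ ((A.card : ℤ) - (Fintype.card V : ℤ) + (numComp A : ℤ))

namespace SimpleGraph

variable {V α : Type*} (H : SimpleGraph V)

def constOnAdjEquiv :
    {σ : V → α // ∀ v w, H.Adj v w → σ v = σ w} ≃ (H.ConnectedComponent → α) where
  toFun σ := ConnectedComponent.lift σ.1 fun _ _ p hp => by
    induction p with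
    | nil => rfl
    | cons h _ ih => exact (σ.2 _ _ h).trans (ih hp.of_cons)
  invFun f := ⟨fun v => f (H.connectedComponentMk v), fun _ _ h =>
    congrArg f (ConnectedComponent.sound h.reachable)⟩
  left_inv _ := rfl
  right_inv f := by
    ext c
    induction c using ConnectedComponent.ind
    rfl

lemma fromEdgeSet_adj_imp_eq_iff_forall_isDiag_map (A : Set (Sym2 V)) (σ : V → α) :
    (∀ v w, (fromEdgeSet A).Adj v w → σ v = σ w) ↔ ∀ e ∈ A, (e.map σ).IsDiag := by
  refine ⟨fun h e he => ?_, fun h v w hvw => by simpa using h _ (fromEdgeSet_adj A |>.1 hvw).1⟩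
  induction e with
  | _ v w =>
    by_cases hvw : v = w
    · simp [hvw]
    · simpa using h v w ((fromEdgeSet_adj A).2 ⟨he, hvw⟩)

end SimpleGraph

section

variable {V : Type*} [Fintype V]

open SimpleGraph in
lemma numComp_anti {A B : Finset (Sym2 V)} (h : A ⊆ B) : numComp B ≤ numComp A :=
  Nat.card_le_card_of_surjective _ <|
    ConnectedComponent.surjective_map_ofLE <| fromEdgeSet_mono <| coe_subset.2 h

variable [DecidableEq V] {α : Type*} [Fintype α] [DecidableEq α]

lemma card_filter_forall_isDiag_map (A : Finset (Sym2 V)) :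
    #{σ : V → α | ∀ e ∈ A, (e.map σ).IsDiag} = Fintype.card α ^ numComp A := by
  rw [← Fintype.card_subtype, ← Nat.card_eq_fintype_card, ← Nat.card_eq_fintype_card,
    numComp, ← Nat.card_fun]
  refine Nat.card_congr <| (Equiv.subtypeEquivRight fun σ => ?_).trans
    (SimpleGraph.fromEdgeSet (A : Set (Sym2 V))).constOnAdjEquiv
  exact (SimpleGraph.fromEdgeSet_adj_imp_eq_iff_forall_isDiag_map _ σ).symm

lemma card_filter_forall_not_isDiag_map (E : Finset (Sym2 V)) :
    (#{σ : V → α | ∀ e ∈ E, ¬ (e.map σ).IsDiag} : ℤ) =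
      ∑ A ∈ E.powerset, (-1) ^ #A * (Fintype.card α : ℤ) ^ numComp A := by
  have h := inclusion_exclusion_card_inf_compl E fun e => {σ : V → α | (e.map σ).IsDiag}
  convert h using 3 with A
  · ext σ; simp [mem_inf]
  · rw [← Nat.cast_pow, ← card_filter_forall_isDiag_map]
    congr 3
    ext σ; simp [mem_inf]

end

theorem chromatic_eq_tutte_general {V : Type*} [Fintype V] [DecidableEq V]
    (G : SimpleGraph V) [DecidableRel G.Adj] (x : ℕ) :
    (((univ.filter fun σ : V → Fin x =>
        ∀ e ∈ G.edgeFinset, ¬ (e.map σ).IsDiag).card : ℝ)) =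
      (-1 : ℝ) ^ ((Fintype.card V : ℤ) - (numComp G.edgeFinset : ℤ)) *
        (x : ℝ) ^ (numComp G.edgeFinset) * tutte G (1 - (x : ℝ)) 0 := by
  have hcount := card_filter_forall_not_isDiag_map (α := Fin x) G.edgeFinset
  rw [Fintype.card_fin] at hcount
  rw [← Int.cast_natCast, hcount, tutte, mul_sum]
  push_cast
  refine sum_congr rfl fun A hA => ?_
  obtain ⟨d, hd⟩ := Nat.exists_eq_add_of_le (numComp_anti (mem_powerset.1 hA))
  set k := numComp G.edgeFinset
  rw [hd]
  push_cast
  rw [add_sub_cancel_left, sub_sub_cancel_left, zero_sub, zpow_natCast, neg_pow, pow_add]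
  have hsign : (-1 : ℝ) ^ ((Fintype.card V : ℤ) - k) * (-1) ^ d *
      (-1) ^ ((#A : ℤ) - Fintype.card V + (k + d)) = (-1) ^ #A := by
    rw [← zpow_natCast _ d, ← zpow_add₀ (by norm_num), ← zpow_add₀ (by norm_num),
      show (Fintype.card V : ℤ) - k + d + (#A - Fintype.card V + (k + d)) = #A + 2 * d by ring,
      zpow_add₀ (by norm_num), (even_two_mul (d : ℤ)).neg_one_zpow, mul_one, zpow_natCast]
  linear_combination -(x : ℝ) ^ k * x ^ d * hsign

/-- For every positive integer `x`, the number of proper colorings of `G`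
with `x` colors equals `(−1)^{|V| − k(G)} · x^{k(G)} · t(G; 1−x, 0)`. -/
theorem chromatic_eq_tutte {V : Type*} [Fintype V] [DecidableEq V]
    (G : SimpleGraph V) [DecidableRel G.Adj] (x : ℕ) (hx : 0 < x) :
    (((univ.filter fun σ : V → Fin x =>
        ∀ e ∈ G.edgeFinset, ¬ (e.map σ).IsDiag).card : ℝ)) =
      (-1 : ℝ) ^ ((Fintype.card V : ℤ) - (numComp G.edgeFinset : ℤ)) *
        (x : ℝ) ^ (numComp G.edgeFinset) * tutte G (1 - (x : ℝ)) 0 :=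
  chromatic_eq_tutte_general G x
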